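/- arXiv:2509.10138 — 6 statements merged into one kernel-verified Lean document; each statement's English description precedes it below -/
import Mathlib

section
/- Let F be a satisfiable finite set of atomic comparisons over V, and let u and v be terms occurring in F. If F entails u ≤ v, then there exists a chain from u to v in F⁺. -/
/-!
Suppose there is no chain from `u` to `v`, and let `R` be the preorder generated by the links
of `F⁺` together with one new link `v → u`. Since `u` does not reach `v`, the new link creates
no new cycles, so any two `R`-equivalent terms take equal values in every model of `F`. A finite
preorder whose constants are ordered as the reals is realized by real values that separate its
equivalence classes: compose a rank function (binary encoding of down-sets) with a strictly
monotone interpolation through the constants. Such a realization of `R` is a model of `F`;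
entailment gives `u ≤ v` in it and the new link gives `v ≤ u`, so `u` and `v` are
`R`-equivalent, i.e. `u` reaches `v` after all.
-/

namespace QC

/-- A term is a variable in `V` or a real constant. -/
inductive Term (V : Type) where
  | var : V → Term V
  | const : ℝ → Term V

/-- The comparison relations `<, ≤, =, ≠`. -/
inductive Rel where
  | lt | le | eq | ne

/-- A comparison between two terms.  (`x ≥ c` is represented as `c ≤ x`, etc.) -/
structure Comp (V : Type) where
  rel : Rel
  lhs : Term V
  rhs : Term V

def Term.eval {V : Type} (σ : V → ℝ) : Term V → ℝ
  | .var x => σ x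
  | .const c => c

def Rel.holds : Rel → ℝ → ℝ → Prop
  | .lt => fun a b => a < b
  | .le => fun a b => a ≤ b
  | .eq => fun a b => a = b
  | .ne => fun a b => a ≠ b

/-- An assignment `σ : V → ℝ` satisfies a comparison. -/
def Comp.holds {V : Type} (a : Comp V) (σ : V → ℝ) : Prop :=
  a.rel.holds (a.lhs.eval σ) (a.rhs.eval σ)

def Term.isVar {V : Type} : Term V → Prop
  | .var _ => True
  | .const _ => False

/-- An atomic comparison: at least one side is a variable. -/
def IsAC {V : Type} (a : Comp V) : Prop := a.lhs.isVar ∨ a.rhs.isVar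

/-- `σ` satisfies every comparison in the finite set `F`. -/
def Sat {V : Type} (F : Finset (Comp V)) (σ : V → ℝ) : Prop := ∀ a ∈ F, a.holds σ

/-- The real constant `c` occurs in `F`. -/
def ConstOccurs {V : Type} (F : Finset (Comp V)) (c : ℝ) : Prop :=
  ∃ a ∈ F, a.lhs = Term.const c ∨ a.rhs = Term.const c

/-- The term `t` occurs in `F`. -/
def TermOccurs {V : Type} (F : Finset (Comp V)) (t : Term V) : Prop :=
  ∃ a ∈ F, a.lhs = t ∨ a.rhs = t

/-- `F⁺`: `F` together with `c < c'` for every pair of constants `c < c'` occurring in `F`. -/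
def Fplus {V : Type} (F : Finset (Comp V)) : Set (Comp V) :=
  (↑F : Set (Comp V)) ∪
    {a : Comp V | ∃ c c' : ℝ, c < c' ∧ ConstOccurs F c ∧ ConstOccurs F c' ∧
      a = ⟨Rel.lt, Term.const c, Term.const c'⟩}

/-- A chain link from `s` to `t` in `Fp`: `Fp` contains `s ≤ t`, `s < t`, or an
equality between `s` and `t` (in either orientation). -/
def Link {V : Type} (Fp : Set (Comp V)) (s t : Term V) : Prop :=
  (⟨Rel.le, s, t⟩ : Comp V) ∈ Fp ∨ (⟨Rel.lt, s, t⟩ : Comp V) ∈ Fp ∨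
  (⟨Rel.eq, s, t⟩ : Comp V) ∈ Fp ∨ (⟨Rel.eq, t, s⟩ : Comp V) ∈ Fp

/-- A non-strict chain link: `s ≤ t` or an equality between `s` and `t` (either orientation). -/
def NSLink {V : Type} (Fp : Set (Comp V)) (s t : Term V) : Prop :=
  (⟨Rel.le, s, t⟩ : Comp V) ∈ Fp ∨
  (⟨Rel.eq, s, t⟩ : Comp V) ∈ Fp ∨ (⟨Rel.eq, t, s⟩ : Comp V) ∈ Fp

/-- `t 0, …, t n` is a chain from `u` to `v` in `Fp`. -/
def IsChainSeq {V : Type} (Fp : Set (Comp V)) (u v : Term V) (n : ℕ)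
    (t : Fin (n + 1) → Term V) : Prop :=
  t 0 = u ∧ t (Fin.last n) = v ∧ ∀ i : Fin n, Link Fp (t i.castSucc) (t i.succ)

/-- There is a chain from `u` to `v` in `Fp`. -/
def ChainFrom {V : Type} (Fp : Set (Comp V)) (u v : Term V) : Prop :=
  ∃ (n : ℕ) (t : Fin (n + 1) → Term V), IsChainSeq Fp u v n t

end QC

open Relation

theorem Relation.ReflTransGen.cases_adjoin_edge {α : Type*} {r : α → α → Prop} {a b s t : α}
    (h : ReflTransGen (fun x y => r x y ∨ x = a ∧ y = b) s t) :
    ReflTransGen r s t ∨ ReflTransGen r s a ∧ ReflTransGen r b t := by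
  induction h with
  | refl => exact .inl .refl
  | tail _ hxy ih =>
    rcases hxy with hxy | ⟨rfl, rfl⟩
    · exact ih.imp (·.tail hxy) fun h => ⟨h.1, h.2.tail hxy⟩
    · exact .inr ⟨ih.elim id And.left, .refl⟩

/-- Adjoining an edge `a → b` to `r` creates no new cycles when `b` does not reach `a`. -/
theorem Relation.ReflTransGen.of_adjoin_edge {α : Type*} {r : α → α → Prop} {a b s t : α}
    (hba : ¬ ReflTransGen r b a)
    (hst : ReflTransGen (fun x y => r x y ∨ x = a ∧ y = b) s t)
    (hts : ReflTransGen (fun x y => r x y ∨ x = a ∧ y = b) t s) : ReflTransGen r s t := by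
  rcases hst.cases_adjoin_edge with hst | ⟨hsa, hbt⟩
  · exact hst
  rcases hts.cases_adjoin_edge with hts | ⟨-, hbs⟩
  · exact absurd (hbt.trans (hts.trans hsa)) hba
  · exact absurd (hbs.trans hsa) hba

/-- The rank of `t` is the binary encoding of its down-set. -/
theorem exists_rank {α : Type*} (r : α → α → Prop) [IsPreorder α r] (T : Finset α) :
    ∃ K : α → ℕ, ∀ s ∈ T, ∀ t ∈ T, (r s t → K s ≤ K t) ∧ (K s = K t → r s t) := by
  classical
  obtain ⟨idx, hidx⟩ := Set.countable_iff_exists_injOn.1 T.countable_toSet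
  let below (t : α) : Finset α := T.filter (r · t)
  refine ⟨fun t => ∑ i ∈ (below t).image idx, 2 ^ i, fun s _ t _ => ⟨fun hst => ?_, fun h => ?_⟩⟩
  · refine Finset.sum_le_sum_of_subset (Finset.image_subset_image fun w hw => ?_)
    simp only [below, Finset.mem_filter] at hw ⊢
    exact ⟨hw.1, trans_of r hw.2 hst⟩
  · have hbelow : below s = below t :=
      Finset.image_injOn_powerset_of_injOn hidx
        (Finset.mem_powerset.2 (Finset.filter_subset _ _))
        (Finset.mem_powerset.2 (Finset.filter_subset _ _)) (Finset.geomSum_injective le_rfl h)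
    have hs : s ∈ below s := Finset.mem_filter.2 ⟨‹s ∈ T›, refl_of r s⟩
    have hst : s ∈ below t := hbelow ▸ hs
    exact (Finset.mem_filter.1 hst).2

/-- `f` is the upper envelope of the broken lines through the points `(k c, c)` with slope `δ`
to the right and slope `M` to the left, where `δ ≤ M` bound all slopes between these points. -/
theorem StrictMonoOn.exists_strictMono_leftInvOn {C : Finset ℝ} {k : ℝ → ℕ}
    (hk : StrictMonoOn k C) : ∃ f : ℕ → ℝ, StrictMono f ∧ Set.LeftInvOn f k C := by
  classical
  rcases C.eq_empty_or_nonempty with rfl | hC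
  · exact ⟨Nat.cast, Nat.strictMono_cast, fun _ h => by simp at h⟩
  let slopes := insert 1 (((C ×ˢ C).filter fun p => p.1 < p.2).image
    fun p => (p.2 - p.1) / ((k p.2 : ℝ) - k p.1))
  have hslopes : slopes.Nonempty := Finset.insert_nonempty _ _
  set δ := slopes.min' hslopes
  set M := slopes.max' hslopes
  have hslope {c c' : ℝ} (hc : c ∈ C) (hc' : c' ∈ C) (hlt : c < c') :
      0 < (k c' : ℝ) - k c ∧
        δ ≤ (c' - c) / ((k c' : ℝ) - k c) ∧ (c' - c) / ((k c' : ℝ) - k c) ≤ M := by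
    have hmem : (c' - c) / ((k c' : ℝ) - k c) ∈ slopes :=
      Finset.mem_insert_of_mem (Finset.mem_image.2 ⟨(c, c'), by simp [hc, hc', hlt], rfl⟩)
    exact ⟨sub_pos.2 (Nat.cast_lt.2 (hk hc hc' hlt)), slopes.min'_le _ hmem, slopes.le_max' _ hmem⟩
  have hδ : 0 < δ := by
    refine (slopes.lt_min'_iff hslopes).2 fun x hx => ?_
    obtain rfl | hx := Finset.mem_insert.1 hx
    · exact one_pos
    obtain ⟨⟨c, c'⟩, hp, rfl⟩ := Finset.mem_image.1 hx
    obtain ⟨hcc', hlt⟩ := Finset.mem_filter.1 hp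
    obtain ⟨hc, hc'⟩ := Finset.mem_product.1 hcc'
    exact div_pos (sub_pos.2 hlt) (hslope hc hc' hlt).1
  have hδM : δ ≤ M := slopes.min'_le_max' hslopes
  let g (c : ℝ) (n : ℕ) : ℝ := c + δ * (n - k c) + (M - δ) * min ((n : ℝ) - k c) 0
  have hg (c : ℝ) : StrictMono (g c) := by
    intro n m hnm
    have hnm' : (n : ℝ) - k c < m - k c := sub_lt_sub_right (Nat.cast_lt.2 hnm) _
    have h₁ := mul_lt_mul_of_pos_left hnm' hδ
    have h₂ := mul_le_mul_of_nonneg_left (min_le_min_right 0 hnm'.le) (sub_nonneg.2 hδM)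
    simp only [g]
    linarith
  have hg_le {c c' : ℝ} (hc : c ∈ C) (hc' : c' ∈ C) : g c (k c') ≤ c' := by
    rcases lt_trichotomy c c' with hlt | rfl | hlt
    · obtain ⟨hpos, hδle, -⟩ := hslope hc hc' hlt
      have := (le_div_iff₀ hpos).1 hδle
      simp only [g, min_eq_right hpos.le]
      linarith
    · simp [g]
    · obtain ⟨hpos, -, hleM⟩ := hslope hc' hc hlt
      have := (div_le_iff₀ hpos).1 hleM
      simp only [g, min_eq_left (by linarith : (k c' : ℝ) - k c ≤ 0)]
      linarith
  refine ⟨fun n => C.sup' hC fun c => g c n, fun n m hnm => ?_, fun c hc => ?_⟩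
  · obtain ⟨c, hc, hn⟩ := C.exists_mem_eq_sup' hC fun c => g c n
    show C.sup' hC _ < C.sup' hC _
    rw [hn]
    exact (hg c hnm).trans_le (C.le_sup' (fun c => g c m) hc)
  · exact le_antisymm (Finset.sup'_le _ _ fun c' hc' => hg_le hc' hc)
      ((show c ≤ g c (k c) by simp [g]).trans (C.le_sup' (fun c' => g c' (k c)) hc))

theorem exists_real_realization {α : Type*} (r : α → α → Prop) [IsPreorder α r] (T : Finset α)
    (C : Finset ℝ) (cst : ℝ → α) (hCT : ∀ c ∈ C, cst c ∈ T)
    (hC : ∀ c ∈ C, ∀ c' ∈ C, r (cst c) (cst c') ↔ c ≤ c') :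
    ∃ val : α → ℝ, (∀ c ∈ C, val (cst c) = c) ∧
      ∀ s ∈ T, ∀ t ∈ T, (r s t → val s ≤ val t) ∧ (val s = val t → r s t) := by
  obtain ⟨K, hK⟩ := exists_rank r T
  have hk : StrictMonoOn (K ∘ cst) C := by
    intro c hc c' hc' hlt
    refine ((hK _ (hCT c hc) _ (hCT c' hc')).1 ((hC c hc c' hc').2 hlt.le)).lt_of_ne fun heq => ?_
    exact hlt.not_ge ((hC c' hc' c hc).1 ((hK _ (hCT c' hc') _ (hCT c hc)).2 heq.symm))
  obtain ⟨f, hf, hfK⟩ := hk.exists_strictMono_leftInvOn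
  exact ⟨f ∘ K, fun c hc => hfK hc, fun s hs t ht =>
    ⟨fun h => hf.monotone ((hK s hs t ht).1 h), fun h => (hK s hs t ht).2 (hf.injective h)⟩⟩

namespace QC

variable {V : Type}

open scoped Classical in
noncomputable def terms (F : Finset (Comp V)) : Finset (Term V) :=
  F.image Comp.lhs ∪ F.image Comp.rhs

theorem mem_terms {F : Finset (Comp V)} {t : Term V} : t ∈ terms F ↔ TermOccurs F t := by
  simp only [terms, Finset.mem_union, Finset.mem_image, TermOccurs]
  grind

noncomputable def consts (F : Finset (Comp V)) : Finset ℝ :=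
  (terms F).preimage Term.const fun _ _ _ _ h => Term.const.inj h

theorem mem_consts {F : Finset (Comp V)} {c : ℝ} : c ∈ consts F ↔ Term.const c ∈ terms F :=
  Finset.mem_preimage

theorem mem_fplus_of_mem {F : Finset (Comp V)} {a : Comp V} (ha : a ∈ F) : a ∈ Fplus F :=
  Set.mem_union_left _ ha

theorem link_const_of_lt {F : Finset (Comp V)} {c c' : ℝ} (hc : c ∈ consts F)
    (hc' : c' ∈ consts F) (hlt : c < c') : Link (Fplus F) (.const c) (.const c') :=
  .inr <| .inl <| Set.mem_union_right _
    ⟨c, c', hlt, mem_terms.1 (mem_consts.1 hc), mem_terms.1 (mem_consts.1 hc'), rfl⟩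

theorem Comp.holds_of_mem_fplus {F : Finset (Comp V)} {σ : V → ℝ} (hσ : Sat F σ) {a : Comp V}
    (ha : a ∈ Fplus F) : a.holds σ := by
  rcases ha with ha | ⟨c, c', hlt, -, -, rfl⟩
  · exact hσ a ha
  · exact hlt

theorem Link.eval_le {F : Finset (Comp V)} {σ : V → ℝ} (hσ : Sat F σ) {s t : Term V}
    (h : Link (Fplus F) s t) : s.eval σ ≤ t.eval σ := by
  rcases h with h | h | h | h
  · exact Comp.holds_of_mem_fplus hσ h
  · exact (Comp.holds_of_mem_fplus hσ h).le
  · exact (Comp.holds_of_mem_fplus hσ h).le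
  · exact (Comp.holds_of_mem_fplus hσ h).ge

theorem eval_le_of_reflTransGen {F : Finset (Comp V)} {σ : V → ℝ} (hσ : Sat F σ) {s t : Term V}
    (h : ReflTransGen (Link (Fplus F)) s t) : s.eval σ ≤ t.eval σ := by
  induction h with
  | refl => exact le_rfl
  | tail _ hlink ih => exact ih.trans (hlink.eval_le hσ)

theorem chainFrom_of_reflTransGen {Fp : Set (Comp V)} {s t : Term V}
    (h : ReflTransGen (Link Fp) s t) : ChainFrom Fp s t := by
  induction h with
  | refl => exact ⟨0, fun _ => s, rfl, rfl, fun i => i.elim0⟩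
  | @tail _ c _ hbc ih =>
    obtain ⟨n, f, h0, hlast, hlink⟩ := ih
    refine ⟨n + 1, Fin.snoc f c, ?_, Fin.snoc_last _ _, Fin.lastCases ?_ fun j => ?_⟩
    · rw [← Fin.castSucc_zero, Fin.snoc_castSucc, h0]
    · rwa [Fin.succ_last, Fin.snoc_last, Fin.snoc_castSucc, hlast]
    · rw [Fin.succ_castSucc, Fin.snoc_castSucc, Fin.snoc_castSucc]
      exact hlink j

theorem exists_assignment_realizing (F : Finset (Comp V)) (R : Term V → Term V → Prop)
    [IsPreorder (Term V) R]
    (hC : ∀ c ∈ consts F, ∀ c' ∈ consts F, R (.const c) (.const c') ↔ c ≤ c') :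
    ∃ σ : V → ℝ, ∀ s ∈ terms F, ∀ t ∈ terms F,
      (R s t → s.eval σ ≤ t.eval σ) ∧ (s.eval σ = t.eval σ → R s t) := by
  obtain ⟨val, hpin, hval⟩ :=
    exists_real_realization R (terms F) (consts F) Term.const (fun _ => mem_consts.1) hC
  have heval : ∀ t ∈ terms F, t.eval (fun x => val (.var x)) = val t := by
    rintro (x | c) ht
    · rfl
    · exact (hpin c (mem_consts.2 ht)).symm
  exact ⟨fun x => val (.var x), fun s hs t ht => by
    rw [heval s hs, heval t ht]
    exact hval s hs t ht⟩

theorem sat_of_realizing {F : Finset (Comp V)} {σ₀ σ : V → ℝ} (hσ₀ : Sat F σ₀)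
    {R : Term V → Term V → Prop} (hlink : ∀ s t, Link (Fplus F) s t → R s t)
    (hcyc : ∀ s t, R s t → R t s → s.eval σ₀ ≤ t.eval σ₀)
    (hσ : ∀ s ∈ terms F, ∀ t ∈ terms F,
      (R s t → s.eval σ ≤ t.eval σ) ∧ (s.eval σ = t.eval σ → R s t)) :
    Sat F σ := by
  rintro ⟨rel, s, t⟩ ha
  have hs : s ∈ terms F := mem_terms.2 ⟨_, ha, .inl rfl⟩
  have ht : t ∈ terms F := mem_terms.2 ⟨_, ha, .inr rfl⟩
  have ha₀ := hσ₀ _ ha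
  have ha' := mem_fplus_of_mem ha
  cases rel with
  | lt =>
    refine ((hσ s hs t ht).1 (hlink _ _ (.inr (.inl ha')))).lt_of_ne fun heq => ?_
    exact (hcyc t s ((hσ t ht s hs).2 heq.symm) (hlink _ _ (.inr (.inl ha')))).not_gt ha₀
  | le => exact (hσ s hs t ht).1 (hlink _ _ (.inl ha'))
  | eq =>
    exact le_antisymm ((hσ s hs t ht).1 (hlink _ _ (.inr (.inr (.inl ha')))))
      ((hσ t ht s hs).1 (hlink _ _ (.inr (.inr (.inr ha')))))
  | ne =>
    intro heq
    have hst := (hσ s hs t ht).2 heq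
    have hts := (hσ t ht s hs).2 heq.symm
    exact ha₀ (le_antisymm (hcyc s t hst hts) (hcyc t s hts hst))

theorem stmt0_general {V : Type} (F : Finset (Comp V))
    (hsat : ∃ σ : V → ℝ, Sat F σ)
    (u v : Term V)
    (hu : TermOccurs F u) (hv : TermOccurs F v)
    (hent : ∀ σ : V → ℝ, Sat F σ → u.eval σ ≤ v.eval σ) :
    ChainFrom (Fplus F) u v := by
  obtain ⟨σ₀, hσ₀⟩ := hsat
  by_contra hno
  replace hno : ¬ ReflTransGen (Link (Fplus F)) u v := fun h => hno (chainFrom_of_reflTransGen h)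
  let R := ReflTransGen fun s t => Link (Fplus F) s t ∨ s = v ∧ t = u
  have hlink : ∀ s t, Link (Fplus F) s t → R s t := fun _ _ h => .single (.inl h)
  have hvu : R v u := .single (.inr ⟨rfl, rfl⟩)
  have hcyc : ∀ s t, R s t → R t s → s.eval σ₀ ≤ t.eval σ₀ := fun _ _ hst hts =>
    eval_le_of_reflTransGen hσ₀ (hst.of_adjoin_edge hno hts)
  have hconst : ∀ c ∈ consts F, ∀ c' ∈ consts F, R (.const c) (.const c') ↔ c ≤ c' := by
    intro c hc c' hc'
    refine ⟨fun h => le_of_not_gt fun hlt => ?_, fun h => ?_⟩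
    · exact hlt.not_ge (hcyc _ _ h (hlink _ _ (link_const_of_lt hc' hc hlt)))
    · obtain rfl | hlt := h.eq_or_lt
      · exact .refl
      · exact hlink _ _ (link_const_of_lt hc hc' hlt)
  obtain ⟨σ, hσ⟩ := exists_assignment_realizing F R hconst
  have hσF : Sat F σ := sat_of_realizing hσ₀ hlink hcyc hσ
  have hu' := mem_terms.2 hu
  have hv' := mem_terms.2 hv
  have huv : u.eval σ = v.eval σ := (hent σ hσF).antisymm ((hσ v hv' u hu').1 hvu)
  exact hno (((hσ u hu' v hv').2 huv).of_adjoin_edge hno hvu)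

/-- clause 2 of the lemma on derivations from sets of ACs:
if a satisfiable finite set `F` of atomic comparisons entails `u ≤ v` for terms
`u, v` occurring in `F`, then there is a chain from `u` to `v` in `F⁺`. -/
theorem stmt0 {V : Type} (F : Finset (Comp V))
    (hAC : ∀ a ∈ F, IsAC a)
    (hsat : ∃ σ : V → ℝ, Sat F σ)
    (u v : Term V)
    (hu : TermOccurs F u) (hv : TermOccurs F v)
    (hent : ∀ σ : V → ℝ, Sat F σ → u.eval σ ≤ v.eval σ) :
    ChainFrom (Fplus F) u v :=
  stmt0_general F hsat u v hu hv hent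

end QC
end

section
/- Let A be a satisfiable finite set of atomic comparisons over V and let B be a finite nonempty set of closed LSI ACs (each of the form x ≤ c for a variable x and real constant c). If A entails the disjunction of the members of B, then there exists a single b ∈ B such that A entails b. -/
namespace QC

/-- A closed LSI comparison: `x ≤ c`. -/
def IsClosedLSI {V : Type} (a : Comp V) : Prop :=
  ∃ (x : V) (c : ℝ), a = ⟨Rel.le, Term.var x, Term.const c⟩

/-- An open LSI comparison: `x < c`. -/
def IsOpenLSI {V : Type} (a : Comp V) : Prop :=
  ∃ (x : V) (c : ℝ), a = ⟨Rel.lt, Term.var x, Term.const c⟩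

/-- A closed RSI comparison: `x ≥ c`, represented as `c ≤ x`. -/
def IsClosedRSI {V : Type} (a : Comp V) : Prop :=
  ∃ (x : V) (c : ℝ), a = ⟨Rel.le, Term.const c, Term.var x⟩

/-- An open RSI comparison: `x > c`, represented as `c < x`. -/
def IsOpenRSI {V : Type} (a : Comp V) : Prop :=
  ∃ (x : V) (c : ℝ), a = ⟨Rel.lt, Term.const c, Term.var x⟩

section Aux
open Filter Topology Polynomial Set


lemma quad_finite (a b c : ℝ) (h : ¬ (a = 0 ∧ b = 0 ∧ c = 0)) :
    {t : ℝ | a + b * t + c * t ^ 2 = 0}.Finite := by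
  have hp : (C a + C b * X + C c * X ^ 2 : ℝ[X]) ≠ 0 := by
    intro hzero
    refine h ⟨?_, ?_, ?_⟩
    · have := congrArg (fun p : ℝ[X] => p.coeff 0) hzero; simpa using this
    · have := congrArg (fun p : ℝ[X] => p.coeff 1) hzero; simpa using this
    · have := congrArg (fun p : ℝ[X] => p.coeff 2) hzero; simpa using this
  refine (Polynomial.finite_setOf_isRoot hp).subset ?_
  intro t ht
  simp only [Set.mem_setOf_eq] at ht
  simp [Polynomial.IsRoot, ht]

lemma l_neBot : (𝓝[>] (0:ℝ) ⊓ Filter.cofinite).NeBot := by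
  rw [Filter.inf_neBot_iff]
  intro s hs t ht
  obtain ⟨u, hu, hsub⟩ := mem_nhdsGT_iff_exists_Ioo_subset.1 hs
  have hinf : (Set.Ioo (0:ℝ) u).Infinite := Set.Ioo_infinite hu
  have : ((Set.Ioo (0:ℝ) u) \ tᶜ).Infinite := hinf.diff (Filter.mem_cofinite.1 ht)
  obtain ⟨x, hx⟩ := this.nonempty
  exact ⟨x, hsub hx.1, by simpa using hx.2⟩

lemma merge {V : Type} (A W : Finset (Comp V)) (σ τ : V → ℝ)
    (hσ : Sat A σ) (hτ : Sat A τ)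
    (hWlsi : ∀ b ∈ W, IsClosedLSI b)
    (hW : ∀ b ∈ W, ¬ b.holds σ ∨ ¬ b.holds τ) :
    ∃ ρ : V → ℝ, Sat A ρ ∧ ∀ b ∈ W, ¬ b.holds ρ := by
  set l : Filter ℝ := 𝓝[>] (0:ℝ) ⊓ Filter.cofinite with hl
  have hne : l.NeBot := l_neBot
  set ρ : ℝ → V → ℝ := fun t x =>
    max (σ x) (τ x) + t * (min (σ x) (τ x) - max (σ x) (τ x)) + t ^ 2 * (σ x - τ x) with hρ
  have heval : ∀ (t : ℝ) (u : Term V),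
      Term.eval (ρ t) u = max (u.eval σ) (u.eval τ)
        + t * (min (u.eval σ) (u.eval τ) - max (u.eval σ) (u.eval τ))
        + t ^ 2 * (u.eval σ - u.eval τ) := by
    intro t u
    cases u with
    | var x => rfl
    | const c => simp [Term.eval]
  -- continuity of t ↦ eval
  have hcont : ∀ u : Term V, Continuous (fun t => Term.eval (ρ t) u) := by
    intro u
    simp only [heval]
    fun_prop
  have heval0 : ∀ u : Term V, Term.eval (ρ 0) u = max (u.eval σ) (u.eval τ) := by
    intro u; rw [heval]; ring
  -- positivity eventually
  have hpos : ∀ᶠ t in l, 0 < t := by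
    have : Set.Ioi (0:ℝ) ∈ 𝓝[>] (0:ℝ) := self_mem_nhdsWithin
    exact Filter.mem_of_superset (Filter.mem_inf_of_left this) (fun x hx => hx)
  have hSat : ∀ a ∈ A, ∀ᶠ t in l, a.holds (ρ t) := by
    intro a ha
    obtain ⟨rel, u, v⟩ := a
    have h1 : rel.holds (u.eval σ) (v.eval σ) := hσ _ ha
    have h2 : rel.holds (u.eval τ) (v.eval τ) := hτ _ ha
    set pu := u.eval σ with hpu
    set pv := v.eval σ with hpv
    set qu := u.eval τ with hqu
    set qv := v.eval τ with hqv
    have hEu : ∀ t, Term.eval (ρ t) u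
        = max pu qu + t * (min pu qu - max pu qu) + t ^ 2 * (pu - qu) := fun t => heval t u
    have hEv : ∀ t, Term.eval (ρ t) v
        = max pv qv + t * (min pv qv - max pv qv) + t ^ 2 * (pv - qv) := fun t => heval t v
    cases rel with
    | lt =>
      have hMax : max pu qu < max pv qv := max_lt_max h1 h2
      have hev : ∀ᶠ t in 𝓝 (0:ℝ), Term.eval (ρ t) u < Term.eval (ρ t) v := by
        refine ContinuousAt.eventually_lt (hcont u).continuousAt (hcont v).continuousAt ?_
        rw [heval0, heval0]; exact hMax
      exact (Filter.mem_inf_of_left (nhdsWithin_le_nhds hev))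
    | le =>
      by_cases hcase : pu = pv ∧ qu = qv
      · refine Filter.Eventually.of_forall (fun t => ?_)
        show Term.eval (ρ t) u ≤ Term.eval (ρ t) v
        rw [hEu, hEv, hcase.1, hcase.2]
      · -- strict sum
        have hsum : pu + qu < pv + qv := by
          rcases lt_or_eq_of_le (h1 : pu ≤ pv) with h | h
          · exact add_lt_add_of_lt_of_le h h2
          · rcases lt_or_eq_of_le (h2 : qu ≤ qv) with h' | h'
            · exact add_lt_add_of_le_of_lt h1 h'
            · exact absurd ⟨h, h'⟩ hcase
        rcases lt_or_eq_of_le (max_le_max (h1 : pu ≤ pv) h2) with hM | hM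
        · have hev : ∀ᶠ t in 𝓝 (0:ℝ), Term.eval (ρ t) u < Term.eval (ρ t) v := by
            refine ContinuousAt.eventually_lt (hcont u).continuousAt (hcont v).continuousAt ?_
            rw [heval0, heval0]; exact hM
          exact Filter.mem_inf_of_left (nhdsWithin_le_nhds
            (hev.mono (fun t ht => le_of_lt ht)))
        · -- max equal, min strictly smaller
          have hmin : min pu qu < min pv qv := by
            have e1 : max pu qu + min pu qu = pu + qu := max_add_min pu qu
            have e2 : max pv qv + min pv qv = pv + qv := max_add_min pv qv
            linarith
          have hev2 : ∀ᶠ t in 𝓝 (0:ℝ),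
              (min pu qu - max pu qu) + t * (pu - qu)
                < (min pv qv - max pv qv) + t * (pv - qv) := by
            refine ContinuousAt.eventually_lt (by fun_prop) (by fun_prop) ?_
            simp only [mul_zero, zero_mul, add_zero]
            linarith
          have := hpos.and (Filter.mem_inf_of_left (nhdsWithin_le_nhds hev2) :
            ∀ᶠ t in l, (min pu qu - max pu qu) + t * (pu - qu)
                < (min pv qv - max pv qv) + t * (pv - qv))
          refine this.mono (fun t ⟨ht, hlt⟩ => ?_)
          show Term.eval (ρ t) u ≤ Term.eval (ρ t) v
          rw [hEu, hEv]
          nlinarith [mul_lt_mul_of_pos_left hlt ht]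
    | eq =>
      refine Filter.Eventually.of_forall (fun t => ?_)
      show Term.eval (ρ t) u = Term.eval (ρ t) v
      rw [hEu, hEv, (h1 : pu = pv), (h2 : qu = qv)]
    | ne =>
      set a0 := max pu qu - max pv qv with ha0
      set b0 := (min pu qu - max pu qu) - (min pv qv - max pv qv) with hb0
      set c0 := (pu - qu) - (pv - qv) with hc0
      have hnz : ¬ (a0 = 0 ∧ b0 = 0 ∧ c0 = 0) := by
        rintro ⟨e1, e2, e3⟩
        have emax : max pu qu = max pv qv := by rw [ha0] at e1; linarith
        have emin : min pu qu = min pv qv := by rw [hb0] at e2; linarith [emax]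
        have esum : pu + qu = pv + qv := by
          have u1 := max_add_min pu qu
          have u2 := max_add_min pv qv
          linarith
        have ediff : pu - qu = pv - qv := by rw [hc0] at e3; linarith
        exact (h1 : pu ≠ pv) (by linarith)
      have hfin := quad_finite a0 b0 c0 hnz
      have hsub : {t : ℝ | Term.eval (ρ t) u = Term.eval (ρ t) v}
          ⊆ {t : ℝ | a0 + b0 * t + c0 * t ^ 2 = 0} := by
        intro t ht
        simp only [Set.mem_setOf_eq] at ht ⊢
        rw [hEu, hEv] at ht
        rw [ha0, hb0, hc0]; ring_nf; ring_nf at ht; linarith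
      have hcof : {t : ℝ | Term.eval (ρ t) u ≠ Term.eval (ρ t) v} ∈ (Filter.cofinite : Filter ℝ) := by
        rw [Filter.mem_cofinite]
        refine (hfin.subset ?_)
        intro t ht
        simp only [Set.mem_compl_iff, Set.mem_setOf_eq, not_not] at ht
        exact hsub ht
      exact Filter.mem_inf_of_right hcof
  have hWev : ∀ b ∈ W, ∀ᶠ t in l, ¬ b.holds (ρ t) := by
    intro b hb
    obtain ⟨x, c, rfl⟩ := hWlsi b hb
    have hgt : c < max (σ x) (τ x) := by
      rcases hW _ hb with h | h
      · exact lt_of_lt_of_le (not_le.1 h) (le_max_left _ _)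
      · exact lt_of_lt_of_le (not_le.1 h) (le_max_right _ _)
    have hev : ∀ᶠ t in 𝓝 (0:ℝ), c < Term.eval (ρ t) (Term.var x) := by
      refine ContinuousAt.eventually_lt continuousAt_const (hcont _).continuousAt ?_
      rw [heval0]; exact hgt
    refine Filter.mem_inf_of_left (nhdsWithin_le_nhds (hev.mono (fun t ht => ?_)))
    show ¬ ((Term.var x).eval (ρ t) ≤ c)
    exact not_le.2 ht
  have hall : ∀ᶠ t in l, (∀ a ∈ A, a.holds (ρ t)) ∧ ∀ b ∈ W, ¬ b.holds (ρ t) := by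
    refine ((Filter.eventually_all_finset A).2 hSat).and ((Filter.eventually_all_finset W).2 hWev)
  obtain ⟨t, h1, h2⟩ := hall.exists
  exact ⟨ρ t, h1, h2⟩


lemma exceed_all {V : Type} (A : Finset (Comp V)) (hsat : ∃ σ : V → ℝ, Sat A σ) :
    ∀ s : Finset (Comp V), (∀ b ∈ s, IsClosedLSI b) →
      (∀ b ∈ s, ∃ σ : V → ℝ, Sat A σ ∧ ¬ b.holds σ) →
      ∃ σ : V → ℝ, Sat A σ ∧ ∀ b ∈ s, ¬ b.holds σ := by
  classical
  intro s
  induction s using Finset.induction_on with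
  | empty =>
    intro _ _
    obtain ⟨σ, hσ⟩ := hsat
    exact ⟨σ, hσ, by simp⟩
  | insert b s' hb ih =>
    intro hlsi hwit
    obtain ⟨σ, hσ, hexc⟩ := ih (fun b' hb' => hlsi b' (Finset.mem_insert_of_mem hb'))
      (fun b' hb' => hwit b' (Finset.mem_insert_of_mem hb'))
    obtain ⟨τ, hτ, hbτ⟩ := hwit b (Finset.mem_insert_self b s')
    refine merge A (insert b s') σ τ hσ hτ hlsi ?_
    intro b' hb'
    rcases Finset.mem_insert.1 hb' with rfl | hb'
    · exact Or.inr hbτ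
    · exact Or.inl (hexc b' hb')
end Aux

/-- case 1 of the single-disjunct lemma: if a satisfiable finite set
`A` of atomic comparisons entails a disjunction of closed LSI comparisons `B`,
then it entails a single member of `B`. -/
theorem stmt4 {V : Type} (A B : Finset (Comp V))
    (hACA : ∀ a ∈ A, IsAC a)
    (hsat : ∃ σ : V → ℝ, Sat A σ)
    (hBne : B.Nonempty)
    (hB : ∀ b ∈ B, IsClosedLSI b)
    (hent : ∀ σ : V → ℝ, Sat A σ → ∃ b ∈ B, b.holds σ) :
    ∃ b ∈ B, ∀ σ : V → ℝ, Sat A σ → b.holds σ := by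
  by_contra hc
  push_neg at hc
  obtain ⟨σ, hσ, hall⟩ := exceed_all A hsat B hB hc
  obtain ⟨b, hb, hbh⟩ := hent σ hσ
  exact hall b hb hbh

end QC
end

section
/- Let A be a satisfiable finite set of atomic comparisons over V none of which uses the relation ≠, and let B be a finite nonempty set of LSI ACs (each of the form x ≤ c or x < c). If A entails the disjunction of the members of B, then there exists a single b ∈ B such that A entails b. -/
namespace QC

lemma sat_max {V : Type} (A : Finset (Comp V)) (hAne : ∀ a ∈ A, a.rel ≠ Rel.ne)
    (σ τ : V → ℝ) (hσ : Sat A σ) (hτ : Sat A τ) :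
    Sat A (fun x => max (σ x) (τ x)) := by
  intro a ha
  have h1 := hσ a ha
  have h2 := hτ a ha
  have key : ∀ t : Term V, Term.eval (fun x => max (σ x) (τ x)) t
      = max (t.eval σ) (t.eval τ) := by
    intro t; cases t <;> simp [Term.eval]
  unfold Comp.holds at h1 h2 ⊢
  rw [key, key]
  cases hr : a.rel
  · rw [hr] at h1 h2
    exact max_lt_max h1 h2
  · rw [hr] at h1 h2
    exact max_le_max h1 h2
  · rw [hr] at h1 h2
    simp only [Rel.holds] at h1 h2 ⊢
    rw [h1, h2]
  · exact absurd hr (hAne a ha)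

lemma sat_sup {V : Type} (A : Finset (Comp V)) (hAne : ∀ a ∈ A, a.rel ≠ Rel.ne)
    {ι : Type} (S : Finset ι) (hS : S.Nonempty) (f : ι → V → ℝ)
    (hf : ∀ i ∈ S, Sat A (f i)) :
    Sat A (fun x => S.sup' hS (fun i => f i x)) := by
  induction hS using Finset.Nonempty.cons_induction with
  | singleton i =>
      simpa using hf i (by simp)
  | cons i S hi hS' ih =>
      have h1 : Sat A (f i) := hf i (by simp)
      have h2 : Sat A (fun x => S.sup' hS' (fun j => f j x)) :=
        ih (fun j hj => hf j (Finset.mem_cons_of_mem hj))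
      have := sat_max A hAne (f i) (fun x => S.sup' hS' (fun j => f j x)) h1 h2
      simpa [Finset.sup'_cons hS'] using this

/-- case 2 of the single-disjunct lemma: if a satisfiable finite set
`A` of atomic comparisons none of which uses `≠` entails a disjunction of LSI
comparisons `B` (closed or open), then it entails a single member of `B`. -/
theorem stmt5 {V : Type} (A B : Finset (Comp V))
    (hACA : ∀ a ∈ A, IsAC a)
    (hAne : ∀ a ∈ A, a.rel ≠ Rel.ne)
    (hsat : ∃ σ : V → ℝ, Sat A σ)
    (hBne : B.Nonempty)
    (hB : ∀ b ∈ B, IsClosedLSI b ∨ IsOpenLSI b)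
    (hent : ∀ σ : V → ℝ, Sat A σ → ∃ b ∈ B, b.holds σ) :
    ∃ b ∈ B, ∀ σ : V → ℝ, Sat A σ → b.holds σ := by
  by_contra hcon
  push_neg at hcon
  have hch : ∀ b ∈ B, ∃ σ : V → ℝ, Sat A σ ∧ ¬ b.holds σ := hcon
  choose! f hf1 hf2 using hch
  set σ : V → ℝ := fun x => B.sup' hBne (fun b => f b x) with hσdef
  have hσ : Sat A σ := sat_sup A hAne B hBne f hf1
  obtain ⟨b, hb, hbh⟩ := hent σ hσ
  have hle : ∀ x : V, f b x ≤ σ x := fun x =>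
    Finset.le_sup' (fun b' => f b' x) hb
  rcases hB b hb with ⟨x, c, rfl⟩ | ⟨x, c, rfl⟩
  · exact hf2 _ hb (le_trans (hle x) hbh)
  · exact hf2 _ hb (lt_of_le_of_lt (hle x) hbh)

end QC
end

section
/- Let β₂ be a finite set of atomic comparisons over V and let C₁, …, Cₖ be finite nonempty sets of ACs over V. Assume β₂ entails the disjunction ⋁ᵢ (⋀ Cᵢ) of the conjunctions of the Cᵢ. Then the following are equivalent: (a) there exists i such that β₂ entails every AC in Cᵢ; (b) for every choice function f selecting one f(i) ∈ Cᵢ for each i ∈ {1, …, k}, if β₂ entails the disjunction f(1) ∨ … ∨ f(k), then β₂ entails f(i) for some single i. -/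
/-!
If no `Cᵢ` is entailed, pick in each `Cᵢ` an AC `f i` together with a model of `β₂` violating it.
By the distributive law `β₂` still entails `f 1 ∨ … ∨ f k`, yet no single `f i` is entailed.
-/

namespace QC

section Entailment

variable {α Φ ι : Type*} (holds : Φ → α → Prop) (M : α → Prop) (C : ι → Set Φ)

theorem entails_iSup_choice_of_entails_iSup_iInf
    (hent : ∀ σ, M σ → ∃ i, ∀ a ∈ C i, holds a σ)
    {f : ι → Φ} (hf : ∀ i, f i ∈ C i) :
    ∀ σ, M σ → ∃ i, holds (f i) σ := fun σ hσ =>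
  let ⟨i, hi⟩ := hent σ hσ
  ⟨i, hi (f i) (hf i)⟩

theorem exists_entailed_of_forall_choice
    (hent : ∀ σ, M σ → ∃ i, ∀ a ∈ C i, holds a σ)
    (hchoice : ∀ f : ι → Φ, (∀ i, f i ∈ C i) →
      (∀ σ, M σ → ∃ i, holds (f i) σ) → ∃ i, ∀ σ, M σ → holds (f i) σ) :
    ∃ i, ∀ a ∈ C i, ∀ σ, M σ → holds a σ := by
  by_contra! hnone
  choose f hf counterexample hmodel hviolated using hnone
  obtain ⟨i, hi⟩ :=
    hchoice f hf (entails_iSup_choice_of_entails_iSup_iInf holds M C hent hf)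
  exact hviolated i (hi _ (hmodel i))

end Entailment

theorem stmt7_general {V : Type} (β₂ : Finset (Comp V))
    (k : ℕ) (C : Fin k → Finset (Comp V))
    (hent : ∀ σ : V → ℝ, Sat β₂ σ → ∃ i, ∀ a ∈ C i, a.holds σ) :
    (∃ i, ∀ a ∈ C i, ∀ σ : V → ℝ, Sat β₂ σ → a.holds σ) ↔
    (∀ f : Fin k → Comp V, (∀ i, f i ∈ C i) →
      (∀ σ : V → ℝ, Sat β₂ σ → ∃ i, (f i).holds σ) →
      ∃ i, ∀ σ : V → ℝ, Sat β₂ σ → (f i).holds σ) := by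
  constructor
  · rintro ⟨i, hi⟩ f hf -
    exact ⟨i, fun σ hσ => hi (f i) (hf i) σ hσ⟩
  · exact exists_entailed_of_forall_choice Comp.holds (Sat β₂)
      (fun i => (C i : Set (Comp V))) hent

/-- given that `β₂` entails `⋁ᵢ (⋀ Cᵢ)`, one disjunct suffices
(some `Cᵢ` is fully entailed) iff every containment implication obtained by
choosing one AC from each `Cᵢ`, when true, has a single entailed disjunct. -/
theorem stmt7 {V : Type} (β₂ : Finset (Comp V))
    (hAC : ∀ a ∈ β₂, IsAC a)
    (k : ℕ) (C : Fin k → Finset (Comp V))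
    (hCne : ∀ i, (C i).Nonempty)
    (hCAC : ∀ i, ∀ a ∈ C i, IsAC a)
    (hent : ∀ σ : V → ℝ, Sat β₂ σ → ∃ i, ∀ a ∈ C i, a.holds σ) :
    (∃ i, ∀ a ∈ C i, ∀ σ : V → ℝ, Sat β₂ σ → a.holds σ) ↔
    (∀ f : Fin k → Comp V, (∀ i, f i ∈ C i) →
      (∀ σ : V → ℝ, Sat β₂ σ → ∃ i, (f i).holds σ) →
      ∃ i, ∀ σ : V → ℝ, Sat β₂ σ → (f i).holds σ) :=
  stmt7_general β₂ k C hent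

end QC
end

section
/- Let β₂ be a satisfiable finite set of atomic comparisons over V and let D₁, …, Dₖ be finite nonempty sets of closed LSI ACs (each member of each Dᵢ is of the form x ≤ c). Then β₂ entails the disjunction ⋁ᵢ (⋀ Dᵢ) if and only if there exists a single i such that β₂ entails every AC in Dᵢ. -/
namespace QC

/-! If no single `Dᵢ` is entailed, pick for every `i` a model `σᵢ` of `β₂` with `σᵢ xᵢ > cᵢ` for
some `xᵢ ≤ cᵢ` in `Dᵢ`. The pointwise maximum `τ` of the `σᵢ` violates every `Dᵢ` at once and
satisfies all `<`, `≤`, `=` constraints of `β₂`, but possibly not its `≠` constraints. Moving from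
`τ` a little towards a model `σ₀` of `β₂` keeps the strict inequalities `xᵢ > cᵢ` (continuity) and
the convex constraints, and repairs every `≠` constraint, since each of them fails on the segment
at most at one point, and not at `σ₀`. -/

open AffineMap Filter Topology

variable {V : Type}

theorem Term.eval_sup' {ι : Type*} {s : Finset ι} (hs : s.Nonempty) (σ : ι → V → ℝ)
    (u : Term V) : u.eval (s.sup' hs σ) = s.sup' hs fun i => u.eval (σ i) := by
  cases u with
  | var x => exact Finset.sup'_apply hs σ x
  | const c => exact (Finset.sup'_const hs c).symm

theorem Term.eval_lineMap (σ τ : V → ℝ) (t : ℝ) (u : Term V) :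
    u.eval (lineMap σ τ t) = lineMap (u.eval σ) (u.eval τ) t := by
  cases u with
  | var x => exact pi_lineMap_apply σ τ t x
  | const c => exact (lineMap_same_apply c t).symm

theorem Comp.holds_var_le_const (x : V) (c : ℝ) (σ : V → ℝ) :
    (⟨.le, .var x, .const c⟩ : Comp V).holds σ ↔ σ x ≤ c :=
  Iff.rfl

theorem Rel.holds_sup' {ι : Type*} {s : Finset ι} (hs : s.Nonempty) {r : Rel} (hr : r ≠ .ne)
    {p q : ι → ℝ} (h : ∀ i ∈ s, r.holds (p i) (q i)) : r.holds (s.sup' hs p) (s.sup' hs q) := by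
  cases r with
  | lt => exact Finset.sup'_lt_iff hs |>.2 fun i hi => (h i hi).trans_le (Finset.le_sup' q hi)
  | le => exact Finset.sup'_le hs p fun i hi => (h i hi).trans (Finset.le_sup' q hi)
  | eq => exact Finset.sup'_congr hs rfl h
  | ne => exact absurd rfl hr

theorem Comp.holds_sup' {ι : Type*} {s : Finset ι} (hs : s.Nonempty) {b : Comp V}
    (hb : b.rel ≠ .ne) {σ : ι → V → ℝ} (h : ∀ i ∈ s, b.holds (σ i)) :
    b.holds (s.sup' hs σ) := by
  simpa only [Comp.holds, Term.eval_sup'] using Rel.holds_sup' hs hb h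

theorem Rel.eventually_holds_lineMap {r : Rel} {p₀ q₀ p₁ q₁ : ℝ}
    (h₀ : r ≠ .ne → r.holds p₀ q₀) (h₁ : r.holds p₁ q₁) :
    ∀ᶠ t in 𝓝[>] (0 : ℝ), r.holds (lineMap p₀ p₁ t) (lineMap q₀ q₁ t) := by
  cases r with
  | lt =>
    filter_upwards [Ioo_mem_nhdsGT one_pos] with t ht
    exact lineMap_strict_mono_endpoints (h₀ nofun) h₁ ht.1.le ht.2.le
  | le =>
    filter_upwards [Ioo_mem_nhdsGT one_pos] with t ht
    exact lineMap_mono_endpoints (h₀ nofun) h₁ ht.1.le ht.2.le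
  | eq =>
    have h₀ : p₀ = q₀ := h₀ nofun
    exact Eventually.of_forall fun t => congrArg₂ (lineMap · · t) h₀ h₁
  | ne =>
    by_cases h₀ : p₀ = q₀
    · filter_upwards [self_mem_nhdsWithin] with t (ht : 0 < t)
      rw [h₀]
      exact fun h => h₁ (by simpa [lineMap_apply_ring', ht.ne'] using h)
    · refine mem_nhdsWithin_of_mem_nhds <|
        (isOpen_ne_fun lineMap_continuous lineMap_continuous).mem_nhds ?_
      simpa only [Set.mem_ofPred_eq, lineMap_apply_zero] using h₀

theorem Comp.eventually_holds_lineMap {b : Comp V} {τ σ : V → ℝ}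
    (hτ : b.rel ≠ .ne → b.holds τ) (hσ : b.holds σ) :
    ∀ᶠ t in 𝓝[>] (0 : ℝ), b.holds (lineMap τ σ t) := by
  simpa only [Comp.holds, Term.eval_lineMap] using Rel.eventually_holds_lineMap hτ hσ

theorem Sat.eventually_lineMap {F : Finset (Comp V)} {τ σ : V → ℝ}
    (hτ : ∀ b ∈ F, b.rel ≠ .ne → b.holds τ) (hσ : Sat F σ) :
    ∀ᶠ t in 𝓝[>] (0 : ℝ), Sat F (lineMap τ σ t) :=
  (eventually_all_finset F).2 fun b hb => Comp.eventually_holds_lineMap (hτ b hb) (hσ b hb)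

theorem exists_sat_forall_lt {ι : Type*} [Fintype ι] [Nonempty ι] {F : Finset (Comp V)}
    {σ₀ : V → ℝ} (h₀ : Sat F σ₀) (σ : ι → V → ℝ) (hσ : ∀ i, Sat F (σ i)) (x : ι → V)
    (c : ι → ℝ) (hc : ∀ i, c i < σ i (x i)) : ∃ σ' : V → ℝ, Sat F σ' ∧ ∀ i, c i < σ' (x i) := by
  let τ := Finset.univ.sup' Finset.univ_nonempty σ
  have hτ : ∀ b ∈ F, b.rel ≠ .ne → b.holds τ := fun b hb hne =>
    Comp.holds_sup' _ hne fun i _ => hσ i b hb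
  have hcτ : ∀ i, c i < τ (x i) := fun i =>
    (hc i).trans_le (Finset.le_sup' σ (Finset.mem_univ i) (x i))
  have hnear : ∀ i, ∀ᶠ t in 𝓝[>] (0 : ℝ), c i < lineMap τ σ₀ t (x i) := fun i => by
    simp only [pi_lineMap_apply]
    exact Tendsto.eventually_const_lt (hcτ i) <|
      (lineMap_continuous.tendsto' 0 _ (lineMap_apply_zero _ _)).mono_left nhdsWithin_le_nhds
  obtain ⟨_, hsat, hlt⟩ := (Sat.eventually_lineMap hτ h₀ |>.and (eventually_all.2 hnear)).exists
  exact ⟨_, hsat, hlt⟩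

theorem stmt8_general {V : Type} (β₂ : Finset (Comp V))
    (hsat : ∃ σ : V → ℝ, Sat β₂ σ)
    (k : ℕ) (D : Fin k → Finset (Comp V))
    (hD : ∀ i, ∀ a ∈ D i, IsClosedLSI a) :
    (∀ σ : V → ℝ, Sat β₂ σ → ∃ i, ∀ a ∈ D i, a.holds σ) ↔
    (∃ i, ∀ a ∈ D i, ∀ σ : V → ℝ, Sat β₂ σ → a.holds σ) := by
  refine ⟨fun hL => ?_, fun ⟨i, hi⟩ σ hσ => ⟨i, fun a ha => hi a ha σ hσ⟩⟩
  obtain ⟨σ₀, hσ₀⟩ := hsat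
  have : Nonempty (Fin k) := ⟨(hL σ₀ hσ₀).choose⟩
  by_contra! hR
  choose a ha σ hσ hviol using hR
  choose x c hxc using fun i => hD i (a i) (ha i)
  have hc : ∀ i, c i < σ i (x i) := fun i => by
    simpa only [hxc i, Comp.holds_var_le_const, not_le] using hviol i
  obtain ⟨σ', hσ', hlt⟩ := exists_sat_forall_lt hσ₀ σ hσ x c hc
  obtain ⟨i, hi⟩ := hL σ' hσ'
  have hle := hi (a i) (ha i)
  rw [hxc i, Comp.holds_var_le_const] at hle
  exact (hlt i).not_ge hle

/-- homomorphism property for closed LSI containing queries: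
a satisfiable `β₂` entails `⋁ᵢ (⋀ Dᵢ)`, where each `Dᵢ` consists of closed LSI
comparisons, iff a single `Dᵢ` is fully entailed by `β₂`. -/
theorem stmt8 {V : Type} (β₂ : Finset (Comp V))
    (hAC : ∀ a ∈ β₂, IsAC a)
    (hsat : ∃ σ : V → ℝ, Sat β₂ σ)
    (k : ℕ) (D : Fin k → Finset (Comp V))
    (hDne : ∀ i, (D i).Nonempty)
    (hD : ∀ i, ∀ a ∈ D i, IsClosedLSI a) :
    (∀ σ : V → ℝ, Sat β₂ σ → ∃ i, ∀ a ∈ D i, a.holds σ) ↔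
    (∃ i, ∀ a ∈ D i, ∀ σ : V → ℝ, Sat β₂ σ → a.holds σ) :=
  stmt8_general β₂ hsat k D hD

end QC
end

section
/- Let β be a satisfiable finite set of atomic comparisons over V and, for i = 1, …, k, let βᵢ be a finite nonempty set of ACs consisting of closed LSI ACs (x ≤ c) together with at most one open RSI AC (x > c). If β entails the disjunction ⋁ᵢ (⋀ βᵢ), then there exists i such that either (i) β entails every member of βᵢ, or (ii) there is exactly one e ∈ βᵢ such that β does not entail e, and β entails every member of βᵢ other than e. -/
/-! If no `βᵢ` qualifies, each `βᵢ` has two members not entailed by `β`, and as at most one of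
them is an open RSI comparison, some closed LSI member `xᵢ ≤ cᵢ` fails at a solution `τᵢ` of `β`.
Solutions of a finite set of comparisons are closed under approximate maxima:
`v ↦ max (τ v) (τ' v - η)` is again a solution for every `η ≥ 0` outside a finite set, the
exceptions coming from `≠`-comparisons. Folding the `τᵢ` together this way gives a solution of `β`
with `xᵢ > cᵢ` for every `i`, so it satisfies no `⋀ βᵢ`. -/

namespace QC

section Combination

variable {V : Type}

def Entails (β : Finset (Comp V)) (e : Comp V) : Prop := ∀ σ : V → ℝ, Sat β σ → e.holds σ

def maxShift (τ τ' : V → ℝ) (η : ℝ) : V → ℝ := fun v => max (τ v) (τ' v - η)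

theorem Term.eval_maxShift {τ τ' : V → ℝ} {η : ℝ} (hη : 0 ≤ η) (t : Term V) :
    t.eval (maxShift τ τ' η) = max (t.eval τ) (t.eval τ' - η) := by
  cases t with
  | var x => rfl
  | const c => exact (max_eq_left (sub_le_self c hη)).symm

theorem max_sub_ne_max_sub {a a' b b' η : ℝ} (h : a ≠ b) (h' : a' ≠ b')
    (h₁ : η ≠ b' - a) (h₂ : η ≠ a' - b) : max a (a' - η) ≠ max b (b' - η) := by
  rcases max_choice a (a' - η) with ha | ha <;> rcases max_choice b (b' - η) with hb | hb <;>
    rw [ha, hb]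
  · exact h
  · exact fun hab => h₁ (by linarith)
  · exact fun hab => h₂ (by linarith)
  · exact fun hab => h' (by linarith)

/-- The shifts `η` at which `maxShift τ τ' η` may break a `≠`-comparison
satisfied by `τ` and `τ'`. -/
noncomputable def Comp.badShifts (a : Comp V) (τ τ' : V → ℝ) : Finset ℝ :=
  {a.rhs.eval τ' - a.lhs.eval τ, a.lhs.eval τ' - a.rhs.eval τ}

theorem Comp.holds_maxShift {a : Comp V} {τ τ' : V → ℝ} {η : ℝ} (h : a.holds τ) (h' : a.holds τ')
    (hη : 0 ≤ η) (hbad : η ∉ a.badShifts τ τ') : a.holds (maxShift τ τ' η) := by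
  obtain ⟨rel, l, r⟩ := a
  simp only [Comp.badShifts, Finset.mem_insert, Finset.mem_singleton, not_or] at hbad
  simp only [Comp.holds, Term.eval_maxShift hη] at h h' ⊢
  cases rel with
  | lt => exact max_lt_max h (sub_lt_sub_right h' η)
  | le => exact max_le_max h (sub_le_sub_right h' η)
  | eq => exact congrArg₂ max h (congrArg (· - η) h')
  | ne => exact max_sub_ne_max_sub h h' hbad.1 hbad.2

theorem Sat.exists_sat_approx_max {β : Finset (Comp V)} {τ τ' : V → ℝ} (h : Sat β τ)
    (h' : Sat β τ') {ε : ℝ} (hε : 0 < ε) :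
    ∃ ρ, Sat β ρ ∧ τ ≤ ρ ∧ ∀ v, τ' v - ε < ρ v := by
  obtain ⟨η, ⟨hη₀, hηε⟩, hbad⟩ :=
    (Set.Ioo_infinite hε).exists_notMem_finset (β.biUnion (·.badShifts τ τ'))
  refine ⟨maxShift τ τ' η, fun a ha => ?_, fun v => le_max_left _ _,
    fun v => lt_of_lt_of_le (by linarith) (le_max_right _ _)⟩
  exact Comp.holds_maxShift (h a ha) (h' a ha) hη₀.le
    fun hη => hbad (Finset.mem_biUnion.2 ⟨a, ha, hη⟩)

theorem exists_sat_forall_lt_s10 {β : Finset (Comp V)} (hsat : ∃ σ, Sat β σ) {ι : Type*}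
    (s : Finset ι) (x : ι → V) (c : ι → ℝ) (hx : ∀ i ∈ s, ∃ τ, Sat β τ ∧ c i < τ (x i)) :
    ∃ ρ, Sat β ρ ∧ ∀ i ∈ s, c i < ρ (x i) := by
  classical
  induction s using Finset.induction_on with
  | empty => simpa using hsat
  | insert j s _ ih =>
    obtain ⟨ρ, hρ, hρs⟩ := ih fun i hi => hx i (Finset.mem_insert_of_mem hi)
    obtain ⟨τ, hτ, hτj⟩ := hx j (Finset.mem_insert_self j s)
    obtain ⟨ρ', hρ', hle, hlt⟩ := hρ.exists_sat_approx_max hτ (sub_pos.2 hτj)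
    refine ⟨ρ', hρ', fun i hi => ?_⟩
    rcases Finset.mem_insert.1 hi with rfl | hi
    · simpa using hlt (x i)
    · exact (hρs i hi).trans_le (hle _)

theorem exists_closedLSI_not_entailed {β B : Finset (Comp V)}
    (hSI : ∀ a ∈ B, IsClosedLSI a ∨ IsOpenRSI a)
    (hone : ∀ a ∈ B, ∀ b ∈ B, IsOpenRSI a → IsOpenRSI b → a = b)
    (h : ¬ ((∀ e ∈ B, Entails β e) ∨
      ∃ e ∈ B, ¬ Entails β e ∧ ∀ e' ∈ B, e' ≠ e → Entails β e')) :
    ∃ x c, (⟨.le, .var x, .const c⟩ : Comp V) ∈ B ∧ ∃ τ, Sat β τ ∧ c < τ x := by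
  push Not at h
  obtain ⟨⟨e, he, hne⟩, htwo⟩ := h
  obtain ⟨e', he', hee', hne'⟩ := htwo e he hne
  -- of two distinct members of `B`, at most one is an open RSI comparison
  have : ∃ f ∈ B, IsClosedLSI f ∧ ¬ Entails β f := by
    rcases hSI e he with hL | hR
    · exact ⟨e, he, hL, hne⟩
    rcases hSI e' he' with hL' | hR'
    · exact ⟨e', he', hL', hne'⟩
    exact absurd (hone e' he' e he hR' hR) hee'
  obtain ⟨f, hf, ⟨x, c, rfl⟩, hnf⟩ := this
  simp only [Entails, not_forall, exists_prop] at hnf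
  obtain ⟨τ, hτ, hnτ⟩ := hnf
  exact ⟨x, c, hf, τ, hτ, not_le.1 hnτ⟩

end Combination

theorem stmt10_general {V : Type} (β : Finset (Comp V))
    (hsat : ∃ σ : V → ℝ, Sat β σ)
    (k : ℕ) (B : Fin k → Finset (Comp V))
    (hSI : ∀ i, ∀ a ∈ B i, IsClosedLSI a ∨ IsOpenRSI a)
    (hone : ∀ i, ∀ a ∈ B i, ∀ b ∈ B i, IsOpenRSI a → IsOpenRSI b → a = b)
    (hent : ∀ σ : V → ℝ, Sat β σ → ∃ i, ∀ a ∈ B i, a.holds σ) :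
    ∃ i, (∀ e ∈ B i, ∀ σ : V → ℝ, Sat β σ → e.holds σ) ∨
      (∃ e ∈ B i, (¬ ∀ σ : V → ℝ, Sat β σ → e.holds σ) ∧
        ∀ e' ∈ B i, e' ≠ e → ∀ σ : V → ℝ, Sat β σ → e'.holds σ) := by
  by_contra hcon
  choose x c hmem hwit using fun i =>
    exists_closedLSI_not_entailed (hSI i) (hone i) (not_exists.1 hcon i)
  obtain ⟨ρ, hρ, hρc⟩ := exists_sat_forall_lt_s10 hsat Finset.univ x c fun i _ => hwit i
  obtain ⟨i, hi⟩ := hent ρ hρ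
  exact absurd (hi _ (hmem i)) (not_le.2 (hρc i (Finset.mem_univ i)))

/-- case 1 of Proposition 7.2: as Proposition 7.1, but each `βᵢ`
consists of closed LSI comparisons together with at most one open RSI comparison. -/
theorem stmt10 {V : Type} (β : Finset (Comp V))
    (hAC : ∀ a ∈ β, IsAC a)
    (hsat : ∃ σ : V → ℝ, Sat β σ)
    (k : ℕ) (B : Fin k → Finset (Comp V))
    (hBne : ∀ i, (B i).Nonempty)
    (hSI : ∀ i, ∀ a ∈ B i, IsClosedLSI a ∨ IsOpenRSI a)
    (hone : ∀ i, ∀ a ∈ B i, ∀ b ∈ B i, IsOpenRSI a → IsOpenRSI b → a = b)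
    (hent : ∀ σ : V → ℝ, Sat β σ → ∃ i, ∀ a ∈ B i, a.holds σ) :
    ∃ i, (∀ e ∈ B i, ∀ σ : V → ℝ, Sat β σ → e.holds σ) ∨
      (∃ e ∈ B i, (¬ ∀ σ : V → ℝ, Sat β σ → e.holds σ) ∧
        ∀ e' ∈ B i, e' ≠ e → ∀ σ : V → ℝ, Sat β σ → e'.holds σ) :=
  stmt10_general β hsat k B hSI hone hent

end QC
end
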